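/- Let R be a field, G a group, and ρ₀ a multiplicity-free finite-length R[G]-module. For each Jordan–Hölder factor τ of ρ₀, there exists a unique R[G]-submodule ρ_τ ⊆ ρ₀ whose cosocle is isomorphic to τ. -/

import Mathlib

open DirectSum

section Defs
variable (A : Type) [Ring A]

abbrev Subquot {M : Type} [AddCommGroup M] [Module A M] (p q : Submodule A M) :=
  ↥q ⧸ Submodule.comap q.subtype p

/-- `S` is a Jordan–Hölder factor (simple subquotient) of `M`. -/
def IsJHFactor (M : Type) [AddCommGroup M] [Module A M]
    (S : Type) [AddCommGroup S] [Module A S] : Prop :=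
  IsSimpleModule A S ∧ ∃ p q : Submodule A M, p ≤ q ∧ Nonempty (Subquot A p q ≃ₗ[A] S)

/-- `M` has finite length and is multiplicity free: it has a composition series with
pairwise non-isomorphic simple factors. -/
def IsMultFree (M : Type) [AddCommGroup M] [Module A M] : Prop :=
  ∃ (n : ℕ) (f : Fin (n+1) → Submodule A M), Monotone f ∧ f 0 = ⊥ ∧ f (Fin.last n) = ⊤ ∧
    (∀ i : Fin n, IsSimpleModule A (Subquot A (f i.castSucc) (f i.succ))) ∧
    ∀ i j : Fin n, i ≠ j →
      IsEmpty (Subquot A (f i.castSucc) (f i.succ) ≃ₗ[A] Subquot A (f j.castSucc) (f j.succ))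

def IsIndecomposable (M : Type) [AddCommGroup M] [Module A M] : Prop :=
  Nontrivial M ∧ ∀ p q : Submodule A M, IsCompl p q → p = ⊥ ∨ q = ⊥

/-- `V` is `P`-typic: `P` decomposes into nonzero indecomposable summands `ρ i`, and
`V ≅ ⊕ᵢ (Wᵢ ⊗ ρ i)` with `Wᵢ` nonzero, expressed via copies `κ i →₀ ρ i`. -/
def IsTypic (P : Type) [AddCommGroup P] [Module A P]
    (V : Type) [AddCommGroup V] [Module A V] : Prop :=
  ∃ (ι : Type) (_ : Fintype ι) (ρ : ι → Submodule A P),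
    iSupIndep ρ ∧ iSup ρ = ⊤ ∧
    (∀ i, IsIndecomposable A ↥(ρ i)) ∧
    ∃ (κ : ι → Type) (_ : ∀ i, Nonempty (κ i)),
      Nonempty (V ≃ₗ[A] ⨁ i, (κ i →₀ ↥(ρ i)))

/-- `M` has an irreducible cosocle, i.e. a greatest proper submodule. -/
def HasSimpleCosocle (M : Type) [AddCommGroup M] [Module A M] : Prop :=
  ∃ N : Submodule A M, N ≠ ⊤ ∧ ∀ P : Submodule A M, P ≠ ⊤ → P ≤ N

/-- The cosocle of `M` is irreducible and isomorphic to `S`. -/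
def HasCosocle (M : Type) [AddCommGroup M] [Module A M]
    (S : Type) [AddCommGroup S] [Module A S] : Prop :=
  ∃ N : Submodule A M, (N ≠ ⊤ ∧ ∀ P : Submodule A M, P ≠ ⊤ → P ≤ N) ∧
    Nonempty ((M ⧸ N) ≃ₗ[A] S)

end Defs

/-!
Say that `S` occurs between submodules `a ≤ b` if it is a subquotient of `b / a`. For simple `S`,
the modular law splits an occurrence between `a ≤ c` at any intermediate `b`, and multiplicity
freeness forbids `S` to occur both below and above a submodule. Artinianity gives a least `ρ` with
`S` occurring below it. A maximal proper `N < ρ` then has `ρ / N ≅ S`, and any `x < ρ` with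
`x ⊄ N` would satisfy `x / (x ⊓ N) ≅ ρ / N`, contradicting leastness; so `N` is the radical of `ρ`.
If `p` also has cosocle `S`, then `ρ ≤ p`, and `ρ < p` would put `ρ` below the radical of `p`,
making `S` occur both below and above that radical.
-/

open Submodule

theorem CovBy.inf_eq_or_sup_eq {α : Type*} [Lattice α] {a b : α} (h : a ⋖ b) (c : α) :
    a ⊓ c = b ⊓ c ∨ a ⊔ c = b ⊔ c := by
  rcases h.eq_or_eq (le_sup_left : a ≤ a ⊔ b ⊓ c) (sup_le h.le inf_le_left) with h' | h'
  · have hbc : b ⊓ c ≤ a := le_sup_right.trans h'.le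
    exact .inl (le_antisymm (inf_le_inf_right c h.le) (le_inf hbc inf_le_right))
  · have hb : b ≤ a ⊔ c := h'.ge.trans (sup_le_sup_left inf_le_right a)
    exact .inr (le_antisymm (sup_le_sup_right h.le c) (sup_le hb le_sup_right))

section Subquot

variable {A : Type} [Ring A] {M : Type} [AddCommGroup M] [Module A M]

theorem nonempty_subquot_inf_equiv_sup (p q : Submodule A M) :
    Nonempty (Subquot A (p ⊓ q) p ≃ₗ[A] Subquot A q (p ⊔ q)) :=
  ⟨(quotEquivOfEq _ _ (comap_inf _ _ _)).trans (LinearMap.quotientInfEquivSupQuotient p q)⟩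

theorem nonempty_subquot_equiv_of_eq {a b a' b' : Submodule A M} (ha : a = a') (hb : b = b') :
    Nonempty (Subquot A a b ≃ₗ[A] Subquot A a' b') := by
  subst ha hb
  exact ⟨.refl _ _⟩

theorem nonempty_subquot_sup_equiv {p q N : Submodule A M} (hpq : p ≤ q) (hN : q ⊓ N ≤ p) :
    Nonempty (Subquot A (p ⊔ N) (q ⊔ N) ≃ₗ[A] Subquot A p q) := by
  have hinf : q ⊓ (p ⊔ N) = p := by
    rw [inf_comm, sup_inf_assoc_of_le N hpq, inf_comm, sup_eq_left.mpr hN]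
  have hsup : q ⊔ (p ⊔ N) = q ⊔ N := by rw [← sup_assoc, sup_eq_left.mpr hpq]
  obtain ⟨e⟩ := nonempty_subquot_inf_equiv_sup q (p ⊔ N)
  obtain ⟨e₁⟩ := nonempty_subquot_equiv_of_eq hinf rfl
  obtain ⟨e₂⟩ := nonempty_subquot_equiv_of_eq rfl hsup
  exact ⟨e₂.symm.trans (e.symm.trans e₁)⟩

theorem nonempty_subquot_inf_equiv {p q N : Submodule A M} (hpq : p ≤ q) (hN : q ≤ p ⊔ N) :
    Nonempty (Subquot A (p ⊓ N) (q ⊓ N) ≃ₗ[A] Subquot A p q) := by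
  have hinf : q ⊓ N ⊓ p = p ⊓ N := by rw [inf_right_comm, inf_eq_right.mpr hpq]
  have hsup : q ⊓ N ⊔ p = q := by
    rw [sup_comm, inf_comm q N, ← sup_inf_assoc_of_le N hpq, inf_eq_right.mpr hN]
  obtain ⟨e⟩ := nonempty_subquot_inf_equiv_sup (q ⊓ N) p
  obtain ⟨e₁⟩ := nonempty_subquot_equiv_of_eq hinf rfl
  obtain ⟨e₂⟩ := nonempty_subquot_equiv_of_eq rfl hsup
  exact ⟨e₁.symm.trans (e.trans e₂)⟩

theorem covBy_of_subquot_equiv {S : Type} [AddCommGroup S] [Module A S] [IsSimpleModule A S]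
    {p q : Submodule A M} (hpq : p ≤ q) (e : Subquot A p q ≃ₗ[A] S) : p ⋖ q :=
  (covBy_iff_quot_is_simple hpq).mpr (IsSimpleModule.congr e)

end Subquot

/-- `S` is isomorphic to a subquotient of `b / a`. -/
def OccursBetween {A : Type} [Ring A] {M : Type} [AddCommGroup M] [Module A M]
    (S : Type) [AddCommGroup S] [Module A S] (a b : Submodule A M) : Prop :=
  ∃ p q : Submodule A M, a ≤ p ∧ p ≤ q ∧ q ≤ b ∧ Nonempty (Subquot A p q ≃ₗ[A] S)

namespace OccursBetween

variable {A : Type} [Ring A] {M : Type} [AddCommGroup M] [Module A M]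
  {S : Type} [AddCommGroup S] [Module A S] {a b c a' b' N : Submodule A M}

theorem of_equiv (hab : a ≤ b) (e : Subquot A a b ≃ₗ[A] S) : OccursBetween S a b :=
  ⟨a, b, le_rfl, hab, le_rfl, ⟨e⟩⟩

theorem mono (h : OccursBetween S a b) (ha : a' ≤ a) (hb : b ≤ b') : OccursBetween S a' b' :=
  let ⟨p, q, hap, hpq, hqb, e⟩ := h
  ⟨p, q, ha.trans hap, hpq, hqb.trans hb, e⟩

theorem ne [Nontrivial S] (h : OccursBetween S a b) : a ≠ b := by
  rintro rfl
  obtain ⟨p, q, hap, hpq, hqa, ⟨e⟩⟩ := h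
  obtain rfl : q = p := le_antisymm (hqa.trans hap) hpq
  have : Subsingleton (Subquot A q q) :=
    Submodule.Quotient.subsingleton_iff.mpr (comap_subtype_self q)
  exact not_subsingleton S e.symm.toEquiv.subsingleton

theorem sup_right (h : OccursBetween S a b) (hN : b ⊓ N ≤ a) :
    OccursBetween S (a ⊔ N) (b ⊔ N) := by
  obtain ⟨p, q, hap, hpq, hqb, ⟨e⟩⟩ := h
  obtain ⟨e'⟩ := nonempty_subquot_sup_equiv hpq ((inf_le_inf_right N hqb).trans (hN.trans hap))
  exact ⟨p ⊔ N, q ⊔ N, sup_le_sup_right hap N, sup_le_sup_right hpq N,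
    sup_le_sup_right hqb N, ⟨e'.trans e⟩⟩

theorem inf_right (h : OccursBetween S a b) (hN : b ≤ a ⊔ N) :
    OccursBetween S (a ⊓ N) (b ⊓ N) := by
  obtain ⟨p, q, hap, hpq, hqb, ⟨e⟩⟩ := h
  obtain ⟨e'⟩ := nonempty_subquot_inf_equiv hpq (hqb.trans (hN.trans (sup_le_sup_right hap N)))
  exact ⟨p ⊓ N, q ⊓ N, inf_le_inf_right N hap, inf_le_inf_right N hpq,
    inf_le_inf_right N hqb, ⟨e'.trans e⟩⟩

theorem of_inf_right (hab : a ≤ b) (h : OccursBetween S (a ⊓ N) (b ⊓ N)) :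
    OccursBetween S a b :=
  (h.sup_right (N := a) (le_inf inf_le_right (inf_le_left.trans inf_le_right))).mono le_sup_right
    (sup_le inf_le_left hab)

theorem of_sup_right (hab : a ≤ b) (h : OccursBetween S (a ⊔ N) (b ⊔ N)) :
    OccursBetween S a b :=
  (h.inf_right (N := b) (sup_le le_sup_right (le_sup_of_le_left le_sup_right))).mono
    (le_inf le_sup_left hab) inf_le_right

theorem split [IsSimpleModule A S] (h : OccursBetween S a c) (hab : a ≤ b) (hbc : b ≤ c) :
    OccursBetween S a b ∨ OccursBetween S b c := by
  obtain ⟨p, q, hap, hpq, hqc, ⟨e⟩⟩ := h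
  rcases (covBy_of_subquot_equiv hpq e).inf_eq_or_sup_eq b with h | h
  · exact .inr (((of_equiv hpq e).sup_right (h.ge.trans inf_le_left)).mono le_sup_right
      (sup_le hqc hbc))
  · exact .inl (((of_equiv hpq e).inf_right (le_sup_left.trans h.ge)).mono (le_inf hap hab)
      inf_le_right)

theorem nonempty_equiv_of_covBy [Nontrivial S] (h : OccursBetween S a b) (hab : a ⋖ b) :
    Nonempty (Subquot A a b ≃ₗ[A] S) := by
  obtain ⟨p, q, hap, hpq, hqb, e⟩ := h
  have hne : p ≠ q := (of_equiv hpq e.some).ne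
  obtain rfl : p = a := (hab.eq_or_eq hap (hpq.trans hqb)).resolve_right
    fun hp => hne (le_antisymm hpq (hp ▸ hqb))
  obtain rfl : q = b := (hab.eq_or_eq (hap.trans hpq) hqb).resolve_left
    fun hq => hne (le_antisymm hpq (hq ▸ hap))
  exact e

theorem exists_step [IsSimpleModule A S] :
    ∀ {m : ℕ} {g : Fin (m + 1) → Submodule A M}, Monotone g →
      OccursBetween S (g 0) (g (Fin.last m)) →
        ∃ i : Fin m, OccursBetween S (g i.castSucc) (g i.succ)
  | 0, g, _, h => by
    have := IsSimpleModule.nontrivial A S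
    exact (h.ne rfl).elim
  | m + 1, g, hg, h => by
    rcases h.split (hg (Fin.zero_le _)) (hg (Fin.le_last (Fin.last m).castSucc)) with h' | h'
    · obtain ⟨i, hi⟩ := exists_step (g := fun k => g k.castSucc)
        (fun _ _ hxy => hg (Fin.castSucc_le_castSucc_iff.mpr hxy)) h'
      exact ⟨i.castSucc, hi⟩
    · exact ⟨Fin.last m, h'⟩

end OccursBetween

section MultFree

variable {A : Type} [Ring A] {M : Type} [AddCommGroup M] [Module A M]
  {S : Type} [AddCommGroup S] [Module A S]

theorem IsMultFree.isFiniteLength (hmf : IsMultFree A M) : IsFiniteLength A M := by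
  obtain ⟨n, f, hf, hf0, hfn, hsimple, -⟩ := hmf
  exact isFiniteLength_of_exists_compositionSeries
    ⟨⟨n, f, fun i => (covBy_iff_quot_is_simple (hf i.castSucc_le_succ)).mpr (hsimple i)⟩, hf0, hfn⟩

theorem IsMultFree.not_occursBetween_top_of_bot (hmf : IsMultFree A M) [IsSimpleModule A S]
    {N : Submodule A M} (hbot : OccursBetween S ⊥ N) : ¬ OccursBetween S N ⊤ := by
  intro htop
  obtain ⟨n, f, hf, hf0, hfn, hsimple, hfree⟩ := hmf
  have hcov (i : Fin n) : f i.castSucc ⋖ f i.succ :=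
    (covBy_iff_quot_is_simple (hf i.castSucc_le_succ)).mpr (hsimple i)
  have := IsSimpleModule.nontrivial A S
  -- `S` occurs in a step of the series cut down by `N` and in a step pushed up by `N`; both are
  -- the step `f i ⋖ f i.succ` isomorphic to `S`, which cannot survive both `⊓ N` and `⊔ N`.
  obtain ⟨i, hi⟩ := OccursBetween.exists_step (g := fun k => f k ⊓ N)
    (fun _ _ h => inf_le_inf_right N (hf h)) (by simpa [hf0, hfn] using hbot)
  obtain ⟨j, hj⟩ := OccursBetween.exists_step (g := fun k => f k ⊔ N)
    (fun _ _ h => sup_le_sup_right (hf h) N) (by simpa [hf0, hfn] using htop)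
  obtain ⟨ei⟩ := (hi.of_inf_right (hf i.castSucc_le_succ)).nonempty_equiv_of_covBy (hcov i)
  obtain ⟨ej⟩ := (hj.of_sup_right (hf j.castSucc_le_succ)).nonempty_equiv_of_covBy (hcov j)
  obtain rfl : i = j := by_contra fun hij => (hfree i j hij).false (ei.trans ej.symm)
  exact ((hcov i).inf_eq_or_sup_eq N).elim hi.ne hj.ne

theorem IsMultFree.exists_isLeast_occursBetween_bot (hmf : IsMultFree A M) [IsSimpleModule A S]
    (h : OccursBetween S ⊥ (⊤ : Submodule A M)) :
    ∃ ρ : Submodule A M, IsLeast {N | OccursBetween S ⊥ N} ρ := by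
  have : IsArtinian A M := (isFiniteLength_iff_isNoetherian_isArtinian.mp hmf.isFiniteLength).2
  obtain ⟨ρ, hρ, hmin⟩ := wellFounded_lt.has_min {N | OccursBetween S ⊥ N} ⟨⊤, h⟩
  refine ⟨ρ, hρ, fun N hN => ?_⟩
  rcases hN.split bot_le (inf_le_right : ρ ⊓ N ≤ N) with h' | h'
  · exact inf_eq_left.mp (eq_of_le_of_not_lt inf_le_left (hmin _ h'))
  · refine (hmf.not_occursBetween_top_of_bot hρ ?_).elim
    exact (h'.sup_right (inf_comm N ρ).le).mono le_sup_right le_top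

theorem IsLeast.exists_isGreatest_Iio_occursBetween [IsNoetherian A M] [IsSimpleModule A S]
    {ρ : Submodule A M} (hρ : IsLeast {N | OccursBetween S ⊥ N} ρ) :
    ∃ N, IsGreatest (Set.Iio ρ) N ∧ Nonempty (Subquot A N ρ ≃ₗ[A] S) := by
  have := IsSimpleModule.nontrivial A S
  obtain ⟨N, hN⟩ := exists_covBy_of_wellFoundedGT (not_isMin_iff_ne_bot.mpr hρ.1.ne.symm)
  have hNρ : OccursBetween S N ρ :=
    (hρ.1.split bot_le hN.le).resolve_left fun h => hN.lt.not_ge (hρ.2 h)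
  refine ⟨N, ⟨hN.lt, fun x hx => ?_⟩, hNρ.nonempty_equiv_of_covBy hN⟩
  by_contra hxN
  have hsup : ρ ≤ N ⊔ x := ((hN.eq_or_eq le_sup_left (sup_le hN.le hx.le)).resolve_left
    fun h => hxN (h ▸ le_sup_right)).ge
  exact hx.not_ge (hρ.2 ((hNρ.inf_right hsup).mono bot_le inf_le_right))

theorem IsMultFree.eq_of_isLeast_of_isGreatest_Iio (hmf : IsMultFree A M) [IsSimpleModule A S]
    {ρ p N : Submodule A M} (hρ : IsLeast {N | OccursBetween S ⊥ N} ρ)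
    (hN : IsGreatest (Set.Iio p) N) (e : Subquot A N p ≃ₗ[A] S) : p = ρ := by
  have hNp : OccursBetween S N p := .of_equiv hN.1.le e
  refine ((hρ.2 (hNp.mono bot_le le_rfl)).lt_or_eq.resolve_left fun hlt => ?_).symm
  exact hmf.not_occursBetween_top_of_bot (hρ.1.mono le_rfl (hN.2 hlt)) (hNp.mono le_rfl le_top)

end MultFree

theorem hasCosocle_submodule_iff {A : Type} [Ring A] {M : Type} [AddCommGroup M] [Module A M]
    {S : Type} [AddCommGroup S] [Module A S] {p : Submodule A M} :
    HasCosocle A p S ↔ ∃ N, IsGreatest (Set.Iio p) N ∧ Nonempty (Subquot A N p ≃ₗ[A] S) := by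
  have hcomap (Q : Submodule A p) : comap p.subtype (map p.subtype Q) = Q :=
    comap_map_eq_of_injective p.injective_subtype Q
  have hmap_lt {Q : Submodule A p} (hQ : Q ≠ ⊤) : map p.subtype Q < p :=
    (map_subtype_le p Q).lt_of_ne fun h => hQ (by rw [← hcomap Q, h, comap_subtype_self])
  constructor
  · rintro ⟨N', ⟨hN'top, hN'max⟩, e⟩
    refine ⟨map p.subtype N', ⟨hmap_lt hN'top, fun x (hx : x < p) => ?_⟩,
      e.map fun e => (quotEquivOfEq _ _ (hcomap N')).trans e⟩
    have hx' : comap p.subtype x ≠ ⊤ := by rw [Ne, comap_subtype_eq_top]; exact hx.not_ge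
    simpa only [map_comap_subtype, inf_eq_right.mpr hx.le] using
      map_mono (f := p.subtype) (hN'max _ hx')
  · rintro ⟨N, ⟨hNp, hNmax⟩, e⟩
    refine ⟨comap p.subtype N, ⟨?_, fun Q hQ => ?_⟩, e⟩
    · rw [Ne, comap_subtype_eq_top]; exact hNp.not_ge
    · exact (hcomap Q).ge.trans (comap_mono (hNmax (hmap_lt hQ)))

/-- in a multiplicity-free finite-length module, each Jordan–Hölder
factor `τ` is the cosocle of a unique submodule. -/
theorem stmt11 {R G : Type} [Field R] [Group G]
    (P : Type) [AddCommGroup P] [Module (MonoidAlgebra R G) P]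
    (hmf : IsMultFree (MonoidAlgebra R G) P)
    (S : Type) [AddCommGroup S] [Module (MonoidAlgebra R G) S]
    (hS : IsJHFactor (MonoidAlgebra R G) P S) :
    ∃! p : Submodule (MonoidAlgebra R G) P, HasCosocle (MonoidAlgebra R G) ↥p S := by
  obtain ⟨hSsimple, p, q, hpq, e⟩ := hS
  obtain ⟨ρ, hρ⟩ := hmf.exists_isLeast_occursBetween_bot ⟨p, q, bot_le, hpq, le_top, e⟩
  have : IsNoetherian (MonoidAlgebra R G) P :=
    (isFiniteLength_iff_isNoetherian_isArtinian.mp hmf.isFiniteLength).1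
  refine ⟨ρ, hasCosocle_submodule_iff.mpr hρ.exists_isGreatest_Iio_occursBetween, fun p hp => ?_⟩
  obtain ⟨N, hN, ⟨e⟩⟩ := hasCosocle_submodule_iff.mp hp
  exact hmf.eq_of_isLeast_of_isGreatest_Iio hρ hN e
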